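/- (Theorem 1, converse for j-integrals.) Let F : ℝ³ → ℝ and φ, ψ : ℝ² → ℝ satisfy φ(y, F(x,y,z)) = ψ(x,z) for all x,y,z ∈ ℝ, and let Ω, Υ : ℝ² → ℝ be a left inverse of (φ, ψ). If Φ : ℝⁿ → ℝ is a j-integral of the transformed equation (pqd) (for every solution V of (pqd) and all i,j: Φ(V(i+1,j), …, V(i+1,j+n−1)) = Φ(V(i,j), …, V(i,j+n−1))), then the function J : ℝ^{n+1} → ℝ defined by J(x_0, …, x_n) := Φ(φ(x_0,x_1), φ(x_1,x_2), …, φ(x_{n-1},x_n)) is a j-integral of the quad-graph equation: for every solution u and all i,j ∈ ℤ, J(u(i+1,j), …, u(i+1,j+n)) = J(u(i,j), …, u(i,j+n)). -/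

import Mathlib

/-!
Along a solution `u` of the quad-graph equation put `v = φ(u, u_{0,1})`. By (invt),
`v_{1,0} = ψ(u, u_{0,1})`, so the left inverse recovers `u_{0,1}` both from
`(v_{0,1}, v_{1,1})` via `Ω` and from `(v, v_{1,0})` via `Υ`: hence `v` solves (pqd), and
the conservation of `Φ` along `v` is the conservation of `J` along `u`.
-/

section QuadGraph

variable {α β : Type*}

def IsQuadGraphSolution (F : α → α → α → α) (u : ℤ → ℤ → α) : Prop :=
  ∀ i j : ℤ, u (i+1) (j+1) = F (u i j) (u (i+1) j) (u i (j+1))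

def IsPqdSolution (Ω Υ : β → β → α) (v : ℤ → ℤ → β) : Prop :=
  ∀ i j : ℤ, Ω (v i (j+1)) (v (i+1) (j+1)) = Υ (v i j) (v (i+1) j)

def jEdge (φ : α → α → β) (u : ℤ → ℤ → α) (i j : ℤ) : β :=
  φ (u i j) (u i (j+1))

variable {F : α → α → α → α} {φ ψ : α → α → β} {u : ℤ → ℤ → α}

theorem jEdge_succ_eq_psi (hinvt : ∀ x y z, φ y (F x y z) = ψ x z)
    (hu : IsQuadGraphSolution F u) (i j : ℤ) :
    jEdge φ u (i+1) j = ψ (u i j) (u i (j+1)) := by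
  rw [jEdge, hu i j, hinvt]

theorem isPqdSolution_jEdge {Ω Υ : β → β → α} (hinvt : ∀ x y z, φ y (F x y z) = ψ x z)
    (hΩ : ∀ w z, Ω (φ w z) (ψ w z) = w) (hΥ : ∀ w z, Υ (φ w z) (ψ w z) = z)
    (hu : IsQuadGraphSolution F u) :
    IsPqdSolution Ω Υ (jEdge φ u) := by
  intro i j
  rw [jEdge_succ_eq_psi hinvt hu, jEdge_succ_eq_psi hinvt hu, jEdge, hΩ, jEdge, hΥ]

end QuadGraph

/-- Theorem 1, converse for j-integrals: if `Φ` is a `j`-integral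
of the transformed equation (pqd), then
`J(x_0,…,x_n) = Φ(φ(x_0,x_1),…,φ(x_{n-1},x_n))` is a `j`-integral of the
quad-graph equation. -/
theorem j_integral_transforms_back
    (n : ℕ) (F : ℝ → ℝ → ℝ → ℝ) (φ ψ Ω Υ : ℝ → ℝ → ℝ)
    (hinvt : ∀ x y z : ℝ, φ y (F x y z) = ψ x z)
    (hΩ : ∀ w z : ℝ, Ω (φ w z) (ψ w z) = w)
    (hΥ : ∀ w z : ℝ, Υ (φ w z) (ψ w z) = z)
    (Φ : (Fin n → ℝ) → ℝ)
    (hΦ : ∀ V : ℤ → ℤ → ℝ,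
      (∀ i j : ℤ, Ω (V i (j+1)) (V (i+1) (j+1)) = Υ (V i j) (V (i+1) j)) →
      ∀ i j : ℤ,
        Φ (fun k => V (i+1) (j + ((k : ℕ) : ℤ))) =
        Φ (fun k => V i (j + ((k : ℕ) : ℤ)))) :
    ∀ u : ℤ → ℤ → ℝ,
      (∀ i j : ℤ, u (i+1) (j+1) = F (u i j) (u (i+1) j) (u i (j+1))) →
      ∀ i j : ℤ,
        Φ (fun k => φ (u (i+1) (j + ((k : ℕ) : ℤ))) (u (i+1) (j + ((k : ℕ) : ℤ) + 1))) =
        Φ (fun k => φ (u i (j + ((k : ℕ) : ℤ))) (u i (j + ((k : ℕ) : ℤ) + 1))) := by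
  intro u hu
  exact hΦ (jEdge φ u) (isPqdSolution_jEdge hinvt hΩ hΥ hu)
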